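/- Consider a softmax classifier over K classes: given a feature vector φ ∈ ℝ^d and weight rows W_1,…,W_K ∈ ℝ^d, the probability of class k is p(k | φ, W) = exp(φᵀW_k) / Σ_{l=1}^K exp(φᵀW_l). Fix a dataset of N examples with labels y_1,…,y_N and, at each step t ≥ 0, features φ_n^t ∈ ℝ^d with ‖φ_n^t‖ ≤ r; update the weights by W_k^{(t+1)} = W_k^{(t)} − η_t [ (1/N) Σ_{n=1}^N (p(k | φ_n^t, W^{(t)}) − 1[y_n = k]) φ_n^t + λ W_k^{(t)} ]. Suppose labels i and j satisfy y_n ≠ i and y_n ≠ j for all n, and there exist constants η > 0 and p ≥ 0 such that for every step t: η ≤ η_t, λ η_t ≤ 1, r² p < λ, and max over k ∈ {i, j} and n of p(k | φ_n^t, W^{(t)}) ≤ p. Then for every T ≥ 0, ‖W_j^{(T)} − W_i^{(T)}‖ ≤ (1 − η(λ − r² p))^T ‖W_j^{(0)} − W_i^{(0)}‖. -/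
import Mathlib


open scoped RealInnerProductSpace BigOperators

/-- Softmax probability of class `k` given feature vector `φ` and weight rows `W`. -/
noncomputable def softmaxProb {d K : ℕ} (W : Fin K → EuclideanSpace ℝ (Fin d))
    (φ : EuclideanSpace ℝ (Fin d)) (k : Fin K) : ℝ :=
  Real.exp ⟪φ, W k⟫ / ∑ l, Real.exp ⟪φ, W l⟫

lemma exp_abs_sub_le (a b : ℝ) :
    |Real.exp a - Real.exp b| ≤ max (Real.exp a) (Real.exp b) * |a - b| := by
  wlog h : b ≤ a generalizing a b
  · rw [abs_sub_comm, abs_sub_comm a b, max_comm]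
    exact this b a (le_of_not_ge h)
  · have h1 : Real.exp b ≤ Real.exp a := Real.exp_le_exp.2 h
    rw [max_eq_left h1, abs_of_nonneg (sub_nonneg.2 h1), abs_of_nonneg (sub_nonneg.2 h)]
    have h2 : b - a + 1 ≤ Real.exp (b - a) := Real.add_one_le_exp _
    have h3 : Real.exp (b - a) * Real.exp a = Real.exp b := by
      rw [← Real.exp_add]; ring_nf
    nlinarith [Real.exp_pos a, Real.exp_pos b]

lemma softmax_diff_le {d K : ℕ} (W : Fin K → EuclideanSpace ℝ (Fin d))
    (φ : EuclideanSpace ℝ (Fin d)) (i j : Fin K) (p : ℝ)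
    (hi : softmaxProb W φ i ≤ p) (hj : softmaxProb W φ j ≤ p) :
    |softmaxProb W φ j - softmaxProb W φ i| ≤ p * |⟪φ, W j⟫ - ⟪φ, W i⟫| := by
  have hS : 0 < ∑ l, Real.exp ⟪φ, W l⟫ :=
    Finset.sum_pos (fun l _ => Real.exp_pos _) ⟨i, Finset.mem_univ i⟩
  unfold softmaxProb at *
  have hji : Real.exp ⟪φ, W j⟫ ≤ p * (∑ l, Real.exp ⟪φ, W l⟫) := by
    rwa [div_le_iff₀ hS] at hj
  have hii : Real.exp ⟪φ, W i⟫ ≤ p * (∑ l, Real.exp ⟪φ, W l⟫) := by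
    rwa [div_le_iff₀ hS] at hi
  have hmax : max (Real.exp ⟪φ, W j⟫) (Real.exp ⟪φ, W i⟫) ≤ p * (∑ l, Real.exp ⟪φ, W l⟫) :=
    max_le hji hii
  have h1 := exp_abs_sub_le ⟪φ, W j⟫ ⟪φ, W i⟫
  rw [div_sub_div_same, abs_div, abs_of_pos hS, div_le_iff₀ hS]
  calc |Real.exp ⟪φ, W j⟫ - Real.exp ⟪φ, W i⟫|
      ≤ max (Real.exp ⟪φ, W j⟫) (Real.exp ⟪φ, W i⟫) * |⟪φ, W j⟫ - ⟪φ, W i⟫| := h1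
    _ ≤ p * (∑ l, Real.exp ⟪φ, W l⟫) * |⟪φ, W j⟫ - ⟪φ, W i⟫| := by
        exact mul_le_mul_of_nonneg_right hmax (abs_nonneg _)
    _ = p * |⟪φ, W j⟫ - ⟪φ, W i⟫| * (∑ l, Real.exp ⟪φ, W l⟫) := by ring

/-- Multi-step consequence of Lemma 1: under learning rates bounded away from zero and
uniformly small unseen-label probabilities, the distance between the weight rows of two
unseen labels decays geometrically. -/
theorem unseen_label_weight_geometric_decay
    {d K N : ℕ}
    (y : Fin N → Fin K)
    (φ : ℕ → Fin N → EuclideanSpace ℝ (Fin d))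
    (r : ℝ) (hr : ∀ t n, ‖φ t n‖ ≤ r)
    (η : ℕ → ℝ)
    (lam : ℝ)
    (W : ℕ → Fin K → EuclideanSpace ℝ (Fin d))
    (hupd : ∀ t k, W (t + 1) k =
      W t k - η t • ((N : ℝ)⁻¹ •
        ∑ n, (softmaxProb (W t) (φ t n) k - if y n = k then (1 : ℝ) else 0) • φ t n
        + lam • W t k))
    (i j : Fin K) (hi : ∀ n, y n ≠ i) (hj : ∀ n, y n ≠ j)
    (ηlb : ℝ) (hηlb : 0 < ηlb)
    (p : ℝ) (hp : 0 ≤ p)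
    (hη : ∀ t, ηlb ≤ η t)
    (hlamη : ∀ t, lam * η t ≤ 1)
    (hrp : r ^ 2 * p < lam)
    (hprob : ∀ t n, softmaxProb (W t) (φ t n) i ≤ p ∧ softmaxProb (W t) (φ t n) j ≤ p) :
    ∀ T : ℕ, ‖W T j - W T i‖ ≤
      (1 - ηlb * (lam - r ^ 2 * p)) ^ T * ‖W 0 j - W 0 i‖ := by
  set c : ℝ := 1 - ηlb * (lam - r ^ 2 * p) with hc
  have hrp0 : 0 ≤ r ^ 2 * p := mul_nonneg (sq_nonneg r) hp
  have key : ∀ t, ‖W (t + 1) j - W (t + 1) i‖ ≤ c * ‖W t j - W t i‖ := by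
    intro t
    have hηt : 0 < η t := lt_of_lt_of_le hηlb (hη t)
    have hetalam : η t * lam ≤ 1 := by linarith [hlamη t, mul_comm lam (η t)]
    set D := W t j - W t i with hD
    have hdiff : W (t + 1) j - W (t + 1) i
        = (1 - η t * lam) • D - (η t * (N : ℝ)⁻¹) •
          ∑ n, (softmaxProb (W t) (φ t n) j - softmaxProb (W t) (φ t n) i) • φ t n := by
      have e1 : ∀ n : Fin N,
          (softmaxProb (W t) (φ t n) j - if y n = j then (1 : ℝ) else 0)
            = softmaxProb (W t) (φ t n) j := fun n => by rw [if_neg (hj n), sub_zero]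
      have e2 : ∀ n : Fin N,
          (softmaxProb (W t) (φ t n) i - if y n = i then (1 : ℝ) else 0)
            = softmaxProb (W t) (φ t n) i := fun n => by rw [if_neg (hi n), sub_zero]
      have e3 : ∑ n, (softmaxProb (W t) (φ t n) j - softmaxProb (W t) (φ t n) i) • φ t n
          = (∑ n, softmaxProb (W t) (φ t n) j • φ t n)
            - ∑ n, softmaxProb (W t) (φ t n) i • φ t n := by
        rw [← Finset.sum_sub_distrib]
        exact Finset.sum_congr rfl fun n _ => sub_smul _ _ _
      rw [hupd t j, hupd t i]
      simp only [e1, e2, e3, hD]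
      module
    have hsum : ‖∑ n, (softmaxProb (W t) (φ t n) j - softmaxProb (W t) (φ t n) i) • φ t n‖
        ≤ (N : ℝ) * (r ^ 2 * p * ‖D‖) := by
      calc ‖∑ n, (softmaxProb (W t) (φ t n) j - softmaxProb (W t) (φ t n) i) • φ t n‖
          ≤ ∑ n : Fin N,
              ‖(softmaxProb (W t) (φ t n) j - softmaxProb (W t) (φ t n) i) • φ t n‖ :=
            norm_sum_le _ _
        _ ≤ ∑ _n : Fin N, r ^ 2 * p * ‖D‖ := by
            apply Finset.sum_le_sum
            intro n _
            rw [norm_smul, Real.norm_eq_abs]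
            have h1 := softmax_diff_le (W t) (φ t n) i j p (hprob t n).1 (hprob t n).2
            have h2 : ⟪φ t n, W t j⟫ - ⟪φ t n, W t i⟫ = ⟪φ t n, D⟫ := by
              rw [hD, inner_sub_right]
            rw [h2] at h1
            have h3 : |⟪φ t n, D⟫| ≤ ‖φ t n‖ * ‖D‖ := abs_real_inner_le_norm _ _
            have hφn : 0 ≤ ‖φ t n‖ := norm_nonneg _
            have hrn : ‖φ t n‖ ≤ r := hr t n
            nlinarith [mul_le_mul_of_nonneg_right h1 hφn,
              mul_le_mul_of_nonneg_right h3 (mul_nonneg hp hφn),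
              mul_le_mul_of_nonneg_right
                (mul_le_mul hrn hrn hφn (hφn.trans hrn))
                (mul_nonneg hp (norm_nonneg D))]
        _ = (N : ℝ) * (r ^ 2 * p * ‖D‖) := by
            rw [Finset.sum_const, Finset.card_univ, Fintype.card_fin, nsmul_eq_mul]
    have hNN : (N : ℝ)⁻¹ * (N : ℝ) ≤ 1 := by
      rcases eq_or_ne (N : ℝ) 0 with h | h
      · simp [h]
      · simp [inv_mul_cancel₀ h]
    have hNinv : 0 ≤ (N : ℝ)⁻¹ := by positivity
    have hbound : ‖W (t + 1) j - W (t + 1) i‖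
        ≤ (1 - η t * lam) * ‖D‖ + η t * (r ^ 2 * p * ‖D‖) := by
      rw [hdiff]
      calc ‖(1 - η t * lam) • D - (η t * (N : ℝ)⁻¹) •
            ∑ n, (softmaxProb (W t) (φ t n) j - softmaxProb (W t) (φ t n) i) • φ t n‖
          ≤ ‖(1 - η t * lam) • D‖ + ‖(η t * (N : ℝ)⁻¹) •
            ∑ n, (softmaxProb (W t) (φ t n) j - softmaxProb (W t) (φ t n) i) • φ t n‖ :=
            norm_sub_le _ _
        _ ≤ (1 - η t * lam) * ‖D‖ + η t * (r ^ 2 * p * ‖D‖) := by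
            rw [norm_smul, norm_smul, Real.norm_eq_abs, Real.norm_eq_abs,
              abs_of_nonneg (by linarith : (0:ℝ) ≤ 1 - η t * lam),
              abs_of_nonneg (by positivity : (0:ℝ) ≤ η t * (N : ℝ)⁻¹)]
            have hd0 : 0 ≤ r ^ 2 * p * ‖D‖ := mul_nonneg hrp0 (norm_nonneg _)
            nlinarith [mul_le_mul_of_nonneg_left hsum (mul_nonneg hηt.le hNinv),
              mul_le_mul_of_nonneg_right hNN (mul_nonneg hηt.le hd0)]
    have hfac : (1 - η t * lam) * ‖D‖ + η t * (r ^ 2 * p * ‖D‖) ≤ c * ‖D‖ := by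
      rw [hc]
      have h4 : ηlb * (lam - r ^ 2 * p) ≤ η t * (lam - r ^ 2 * p) :=
        mul_le_mul_of_nonneg_right (hη t) (by linarith)
      nlinarith [norm_nonneg D]
    exact le_trans hbound hfac
  have hc0 : 0 ≤ c := by
    rw [hc]
    have h4 : ηlb * (lam - r ^ 2 * p) ≤ η 0 * (lam - r ^ 2 * p) :=
      mul_le_mul_of_nonneg_right (hη 0) (by linarith)
    have h5 : η 0 * (lam - r ^ 2 * p) ≤ η 0 * lam := by
      have : 0 < η 0 := lt_of_lt_of_le hηlb (hη 0)
      nlinarith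
    linarith [hlamη 0, mul_comm lam (η 0)]
  intro T
  induction T with
  | zero => simp
  | succ T ih =>
    calc ‖W (T + 1) j - W (T + 1) i‖ ≤ c * ‖W T j - W T i‖ := key T
      _ ≤ c * (c ^ T * ‖W 0 j - W 0 i‖) := mul_le_mul_of_nonneg_left ih hc0
      _ = c ^ (T + 1) * ‖W 0 j - W 0 i‖ := by ring
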